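/- arXiv:1509.07173 — 6 statements merged into one kernel-verified Lean document; each statement's English description precedes it below -/
import Mathlib

section
/- Let (X, δ) be a diversity and f : P_fin(X) → ℝ. Then the following are equivalent: (a) there exist a diversity (Y, δ_Y), a map ι : X → Y with δ_Y(ι(A)) = δ(A) for all finite A ⊆ X, and a point z ∈ Y such that f(A) = δ_Y(ι(A) ∪ {z}) for all finite A ⊆ X; (b) f satisfies: (i) f(∅) = 0; (ii) f(A) ≥ δ(A) for all finite A ⊆ X; (iii) f(A ∪ C) + δ(B ∪ C) ≥ f(A ∪ B) for all finite A, B, C ⊆ X with C nonempty; (iv) f(A) + f(B) ≥ f(A ∪ B) for all finite A, B ⊆ X. -/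
open scoped Classical

/-- A diversity on `X`: a real-valued function on finite subsets satisfying
(D1) nonnegativity with `δ A = 0 ↔ |A| ≤ 1`, and (D2) the triangle inequality. -/
structure Diversity (X : Type*) where
  δ : Finset X → ℝ
  nonneg : ∀ A : Finset X, 0 ≤ δ A
  eq_zero_iff : ∀ A : Finset X, δ A = 0 ↔ A.card ≤ 1
  triangle : ∀ A B C : Finset X, B.Nonempty → δ (A ∪ C) ≤ δ (A ∪ B) + δ (B ∪ C)

/-- An admissible function on a diversity (a one-point extension). -/
structure IsAdmissible {X : Type*} (D : Diversity X) (f : Finset X → ℝ) : Prop where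
  empty : f ∅ = 0
  le : ∀ A : Finset X, D.δ A ≤ f A
  tri : ∀ A B C : Finset X, C.Nonempty → f (A ∪ B) ≤ f (A ∪ C) + D.δ (B ∪ C)
  subadd : ∀ A B : Finset X, f (A ∪ B) ≤ f A + f B

/-- Restriction of a diversity to a subset. -/
noncomputable def Diversity.restrict {X : Type*} (D : Diversity X) (S : Set X) : Diversity S where
  δ A := D.δ (A.image Subtype.val)
  nonneg A := D.nonneg _
  eq_zero_iff A := by
    rw [D.eq_zero_iff, Finset.card_image_of_injective _ Subtype.val_injective]
  triangle A B C hB := by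
    have h := D.triangle (A.image Subtype.val) (B.image Subtype.val) (C.image Subtype.val)
      (hB.image _)
    simpa [Finset.image_union] using h

/-- Separability of the induced metric `d a b = δ {a, b}`. -/
def Diversity.SeparableD {X : Type*} (D : Diversity X) : Prop :=
  ∃ s : Set X, s.Countable ∧ ∀ x : X, ∀ ε : ℝ, 0 < ε → ∃ y ∈ s, D.δ {x, y} < ε

/-- Completeness of the induced metric `d a b = δ {a, b}`. -/
def Diversity.CompleteD {X : Type*} (D : Diversity X) : Prop :=
  ∀ u : ℕ → X, (∀ ε : ℝ, 0 < ε → ∃ N : ℕ, ∀ m ≥ N, ∀ n ≥ N, D.δ {u m, u n} < ε) →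
    ∃ x : X, ∀ ε : ℝ, 0 < ε → ∃ N : ℕ, ∀ n ≥ N, D.δ {u n, x} < ε

/-- The diversity `δ̂` on (finite sets of) admissible functions. -/
noncomputable def hatδ {X : Type*} (F : Finset (Finset X → ℝ)) : ℝ :=
  if F.card ≤ 1 then 0
  else sSup { r : ℝ | ∃ j ∈ F, ∃ A : (Finset X → ℝ) → Finset X,
    r = j ((F.erase j).biUnion A) - ∑ i ∈ F.erase j, i (A i) }

/-- The canonical maximal extension `f_S^X` of an admissible function on `S ⊆ X`. -/
noncomputable def extFun {X : Type*} (D : Diversity X) (S : Set X) (f : Finset S → ℝ)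
    (A : Finset X) : ℝ :=
  sInf { r : ℝ | ∃ (B : Finset S) (As : S → Finset X),
    B.biUnion As = A ∧ r = f B + ∑ b ∈ B, D.δ (insert (b : X) (As b)) }

/-- An admissible function is finitely supported if it is the canonical extension
of an admissible function on some finite nonempty `S ⊆ X`. -/
def FinitelySupported {X : Type*} (D : Diversity X) (f : Finset X → ℝ) : Prop :=
  ∃ S : Set X, S.Finite ∧ S.Nonempty ∧ ∃ g : Finset S → ℝ,
    IsAdmissible (D.restrict S) g ∧ f = extFun D S g

/-- The extension property for a diversity. -/
def Diversity.ExtensionProp {X : Type*} (D : Diversity X) : Prop :=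
  ∀ F : Finset X, ∀ f : Finset ((F : Set X)) → ℝ,
    IsAdmissible (D.restrict (F : Set X)) f →
    ∃ x : X, ∀ A : Finset ((F : Set X)), D.δ (insert x (A.image Subtype.val)) = f A

/-- The approximate extension property for a diversity. -/
def Diversity.ApproxExtensionProp {X : Type*} (D : Diversity X) : Prop :=
  ∀ F : Finset X, ∀ f : Finset ((F : Set X)) → ℝ,
    IsAdmissible (D.restrict (F : Set X)) f →
    ∀ ε : ℝ, 0 < ε →
      ∃ x : X, ∀ A : Finset ((F : Set X)), |D.δ (insert x (A.image Subtype.val)) - f A| ≤ ε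

/-- Ultrahomogeneity: isomorphisms between finite subsets extend to automorphisms. -/
def Diversity.Ultrahomogeneous {X : Type*} (D : Diversity X) : Prop :=
  ∀ (A A' : Finset X) (φ : ((A : Set X)) → ((A' : Set X))), Function.Bijective φ →
    (∀ B : Finset ((A : Set X)),
      D.δ (B.image (fun b => (φ b : X))) = D.δ (B.image Subtype.val)) →
    ∃ Φ : X → X, Function.Bijective Φ ∧ (∀ C : Finset X, D.δ (C.image Φ) = D.δ C) ∧
      ∀ a : ((A : Set X)), Φ a = (φ a : X)

/-!
If `ι` embeds `X` isometrically into a diversity containing `z`, each of the conditions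
on `A ↦ δ_Y (ι A ∪ {z})` is an instance of the triangle inequality of `δ_Y` (with middle
set `{z}` for subadditivity). Conversely, if `f {x} = 0` for some `x`, then
`f = δ (· ∪ {x})` and `x` itself is the new point. Otherwise adjoin a point `none` to `X`,
giving a set containing it the value of `f` on its trace on `X`, and any other set the
value of `δ`. Positivity of `f` on singletons gives (D1); (D2) splits according to which
of the three sets contain `none`, each case being one of the admissibility conditions or
the triangle inequality of `δ`.
-/

open Finset

namespace Diversity

variable {X : Type*} (D : Diversity X)

lemma δ_singleton (a : X) : D.δ {a} = 0 :=
  (D.eq_zero_iff _).mpr (card_singleton a).le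

lemma monotone_δ : Monotone D.δ :=
  monotone_iff_forall_le_insert.mpr fun s a _ => by
    simpa [D.δ_singleton, union_singleton] using D.triangle s {a} ∅ (singleton_nonempty a)

lemma isAdmissible_insert_image {Y : Type*} (DY : Diversity Y) {ι : X → Y}
    (hι : ∀ A, DY.δ (A.image ι) = D.δ A) (z : Y) :
    IsAdmissible D fun A => DY.δ (insert z (A.image ι)) where
  empty := by simpa using DY.δ_singleton z
  le A := hι A ▸ DY.monotone_δ (subset_insert z _)
  tri A B C hC := by
    have h := DY.triangle (insert z (A.image ι)) (C.image ι) (B.image ι) (hC.image ι)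
    rwa [union_comm (C.image ι), ← image_union, hι, insert_union, insert_union, ← image_union,
      ← image_union] at h
  subadd A B := by
    have h := DY.triangle (insert z (A.image ι)) {z} (insert z (B.image ι)) (singleton_nonempty z)
    rwa [union_singleton, insert_idem, singleton_union, insert_idem, insert_union, union_insert,
      insert_idem, ← image_union] at h

end Diversity

namespace IsAdmissible

variable {X : Type*} {D : Diversity X} {f : Finset X → ℝ}

lemma monotone (hf : IsAdmissible D f) : Monotone f :=
  monotone_iff_forall_le_insert.mpr fun s a _ => by
    simpa [D.δ_singleton, union_singleton] using hf.tri s ∅ {a} (singleton_nonempty a)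

lemma le_add (hf : IsAdmissible D f) (A B C : Finset X) :
    f (A ∪ C) ≤ f (A ∪ B) + f (B ∪ C) :=
  (hf.monotone (union_subset_union subset_union_left subset_union_right)).trans (hf.subadd _ _)

lemma eq_δ_insert_of_singleton_eq_zero (hf : IsAdmissible D f) {x : X} (hx : f {x} = 0)
    (A : Finset X) : f A = D.δ (insert x A) := by
  refine le_antisymm ?_ ?_
  · simpa [hx, union_singleton] using hf.tri ∅ A {x} (singleton_nonempty x)
  · calc D.δ (insert x A) ≤ f (A ∪ {x}) := union_singleton x A ▸ hf.le _
      _ ≤ f A := by simpa [hx] using hf.subadd A {x}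

lemma eq_zero_iff (hf : IsAdmissible D f) (hpos : ∀ x, 0 < f {x}) {A : Finset X} :
    f A = 0 ↔ A = ∅ := by
  refine ⟨fun h => ?_, fun h => h ▸ hf.empty⟩
  by_contra hA
  obtain ⟨x, hx⟩ := nonempty_iff_ne_empty.mpr hA
  exact (hpos x).not_ge (h ▸ hf.monotone (singleton_subset_iff.mpr hx))

end IsAdmissible

namespace Diversity

-- The fields of `Diversity` use the classical `DecidableEq`; dropping the derived instance on
-- `Option X` makes the unions and images below use it too.
attribute [-instance] Option.instDecidableEq

variable {X : Type*} (D : Diversity X) (f : Finset X → ℝ)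

noncomputable def adjoinδ (F : Finset (Option X)) : ℝ :=
  if none ∈ F then f F.eraseNone else D.δ F.eraseNone

variable {D f}

lemma adjoinδ_le (hf : IsAdmissible D f) (F : Finset (Option X)) :
    adjoinδ D f F ≤ f F.eraseNone := by
  unfold adjoinδ
  split_ifs
  exacts [le_rfl, hf.le _]

lemma adjoinδ_nonneg (hf : IsAdmissible D f) (F : Finset (Option X)) : 0 ≤ adjoinδ D f F := by
  unfold adjoinδ
  split_ifs
  exacts [(D.nonneg _).trans (hf.le _), D.nonneg _]

lemma adjoinδ_eq_zero_iff (hf : IsAdmissible D f) (hpos : ∀ x, 0 < f {x})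
    (F : Finset (Option X)) : adjoinδ D f F = 0 ↔ F.card ≤ 1 := by
  unfold adjoinδ
  split_ifs with hF
  · have := card_pos.mpr ⟨none, hF⟩
    rw [hf.eq_zero_iff hpos, ← card_eq_zero, card_eraseNone_of_mem hF]
    omega
  · rw [D.eq_zero_iff, card_eraseNone_of_not_mem hF]

lemma adjoinδ_triangle (hf : IsAdmissible D f) (A B C : Finset (Option X)) (hB : B.Nonempty) :
    adjoinδ D f (A ∪ C) ≤ adjoinδ D f (A ∪ B) + adjoinδ D f (B ∪ C) := by
  by_cases hnB : none ∈ B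
  · calc adjoinδ D f (A ∪ C) ≤ f (A ∪ C).eraseNone := adjoinδ_le hf _
      _ ≤ f (A ∪ B).eraseNone + f (B ∪ C).eraseNone := by
        simpa only [eraseNone_union] using hf.le_add _ _ _
      _ = adjoinδ D f (A ∪ B) + adjoinδ D f (B ∪ C) := by simp [adjoinδ, hnB]
  have hB' : B.eraseNone.Nonempty := by
    obtain ⟨_ | x, hx⟩ := hB
    exacts [absurd hx hnB, ⟨x, mem_eraseNone.mpr hx⟩]
  by_cases hnA : none ∈ A <;> by_cases hnC : none ∈ C <;>
    simp only [adjoinδ, eraseNone_union, mem_union, hnA, hnB, hnC, if_true, if_false,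
      or_true, or_false]
  · exact hf.le_add _ _ _
  · simpa only [union_comm C.eraseNone] using hf.tri A.eraseNone C.eraseNone _ hB'
  · simpa only [union_comm _ C.eraseNone, add_comm (f _)] using hf.tri C.eraseNone _ _ hB'
  · exact D.triangle _ _ _ hB'

noncomputable def adjoin (hf : IsAdmissible D f) (hpos : ∀ x, 0 < f {x}) :
    Diversity (Option X) where
  δ := adjoinδ D f
  nonneg := adjoinδ_nonneg hf
  eq_zero_iff := adjoinδ_eq_zero_iff hf hpos
  triangle := adjoinδ_triangle hf

lemma adjoin_δ_image_some (hf : IsAdmissible D f) (hpos : ∀ x, 0 < f {x}) (A : Finset X) :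
    (adjoin hf hpos).δ (A.image some) = D.δ A := by
  simp [adjoin, adjoinδ, eraseNone_image_some]

lemma adjoin_δ_insert_none (hf : IsAdmissible D f) (hpos : ∀ x, 0 < f {x}) (A : Finset X) :
    (adjoin hf hpos).δ (insert none (A.image some)) = f A := by
  show adjoinδ D f _ = _
  rw [adjoinδ, if_pos (mem_insert_self _ _), insert_eq, eraseNone_union, eraseNone_none,
    eraseNone_image_some, empty_union]

theorem _root_.IsAdmissible.exists_extension {X : Type u} {D : Diversity X} {f : Finset X → ℝ}
    (hf : IsAdmissible D f) :
    ∃ (Y : Type u) (DY : Diversity Y) (ι : X → Y) (z : Y),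
      (∀ A : Finset X, DY.δ (A.image ι) = D.δ A) ∧
      (∀ A : Finset X, f A = DY.δ (insert z (A.image ι))) := by
  by_cases hpos : ∀ x, 0 < f {x}
  · exact ⟨Option X, adjoin hf hpos, some, none, adjoin_δ_image_some hf hpos,
      fun A => (adjoin_δ_insert_none hf hpos A).symm⟩
  · push Not at hpos
    obtain ⟨x, hx⟩ := hpos
    have hx0 : f {x} = 0 := le_antisymm hx ((D.nonneg _).trans (hf.le _))
    exact ⟨X, D, id, x, by simp, by simpa using hf.eq_δ_insert_of_singleton_eq_zero hx0⟩

end Diversity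

/-- `f` is realized as a one-point extension of `(X, δ)` iff `f` is admissible. -/
theorem stmt1 {X : Type u} (D : Diversity X) (f : Finset X → ℝ) :
    (∃ (Y : Type u) (DY : Diversity Y) (ι : X → Y) (z : Y),
      (∀ A : Finset X, DY.δ (A.image ι) = D.δ A) ∧
      (∀ A : Finset X, f A = DY.δ (insert z (A.image ι)))) ↔
    IsAdmissible D f := by
  refine ⟨?_, IsAdmissible.exists_extension⟩
  rintro ⟨Y, DY, ι, z, hι, hfz⟩
  exact funext hfz ▸ D.isAdmissible_insert_image DY hι z
end

section
/- Let (X, δ) be a diversity and let E(X) be the set of admissible functions on X. Define δ̂ on finite subsets of E(X) by δ̂(∅) = 0, δ̂({f}) = 0, and for k ≥ 2, δ̂({f₁, …, f_k}) = max over j ∈ {1, …, k} of the supremum, over all finite subsets A₁, …, A_k ⊆ X, of f_j(⋃_{i≠j} A_i) − Σ_{i≠j} f_i(A_i). Then (E(X), δ̂) is a diversity: δ̂ satisfies (D1) and (D2). -/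
open scoped Classical

/-!
Terms of `δ̂` may be taken over any subfamily `T ⊆ K`, even one containing `j`: subadditivity of
`j` absorbs a repeated index, and unused indices get `∅`, on which admissible functions vanish.
(D1): the empty choice shows `δ̂ ≥ 0`, and `f ≠ g` gives a term `f A - g A > 0`; the supremum is
finite because `j A ≤ i A + j {x} + i {x}`.
(D2): for a term of `δ̂ (F ∪ H)` with `j ∈ F`, fix `g ∈ G`, split the indices into those in `F`
and the rest, and let `W` and `B` be the unions of the sets of the two parts. Then
`j (W ∪ B) - ∑_F - g B ≤ δ̂ (F ∪ G)` and `g B - ∑_rest ≤ δ̂ (G ∪ H)`, and the two add up to the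
original term.
-/

namespace Finset

variable {α β : Type*} [DecidableEq β]

lemma biUnion_eq_union_biUnion_erase [DecidableEq α] {s : Finset α} {a : α} (h : a ∈ s)
    (A : α → Finset β) : s.biUnion A = A a ∪ (s.erase a).biUnion A := by
  rw [← biUnion_insert, insert_erase h]

end Finset

namespace IsAdmissible

variable {X : Type*} {D : Diversity X} {f g : Finset X → ℝ}

lemma nonneg (hf : IsAdmissible D f) (A : Finset X) : 0 ≤ f A :=
  (D.nonneg A).trans (hf.le A)

lemma apply_biUnion_le {ι : Type*} (hf : IsAdmissible D f) (s : Finset ι)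
    (A : ι → Finset X) : f (s.biUnion A) ≤ ∑ i ∈ s, f (A i) := by
  classical
  induction s using Finset.induction_on with
  | empty => simp [hf.empty]
  | insert a s ha ih =>
    rw [Finset.biUnion_insert, Finset.sum_insert ha]
    linarith [hf.subadd (A a) (s.biUnion A)]

lemma le_add_singleton (hf : IsAdmissible D f) (hg : IsAdmissible D g) (A : Finset X)
    (x : X) : f A ≤ g A + f {x} + g {x} := by
  have htri := hf.tri ∅ A {x} (Finset.singleton_nonempty x)
  rw [Finset.empty_union, Finset.empty_union] at htri
  linarith [hg.le (A ∪ {x}), hg.subadd A {x}]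

end IsAdmissible

section HatDiversity

variable {X : Type*} {D : Diversity X} {K F G H T : Finset (Finset X → ℝ)}
  {j g : Finset X → ℝ}

def hatδSet (K : Finset (Finset X → ℝ)) : Set ℝ :=
  { r : ℝ | ∃ j ∈ K, ∃ A : (Finset X → ℝ) → Finset X,
    r = j ((K.erase j).biUnion A) - ∑ i ∈ K.erase j, i (A i) }

lemma hatδ_eq_ite (K : Finset (Finset X → ℝ)) :
    hatδ K = if K.card ≤ 1 then 0 else sSup (hatδSet K) := rfl

lemma mem_hatδSet_of_subset_erase (hK : ∀ f ∈ K, IsAdmissible D f) (hj : j ∈ K)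
    (hT : T ⊆ K.erase j) (A : (Finset X → ℝ) → Finset X) :
    j (T.biUnion A) - ∑ i ∈ T, i (A i) ∈ hatδSet K := by
  refine ⟨j, hj, fun i => if i ∈ T then A i else ∅, ?_⟩
  have hunion : (K.erase j).biUnion (fun i => if i ∈ T then A i else ∅) = T.biUnion A := by
    ext x
    simp only [Finset.mem_biUnion]
    constructor
    · rintro ⟨i, -, hx⟩
      split_ifs at hx with hi
      exacts [⟨i, hi, hx⟩, absurd hx (Finset.notMem_empty x)]
    · rintro ⟨i, hi, hx⟩
      exact ⟨i, hT hi, by rwa [if_pos hi]⟩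
  have hsum : ∑ i ∈ K.erase j, i (if i ∈ T then A i else ∅) = ∑ i ∈ T, i (A i) := by
    have hzero : ∀ i ∈ K.erase j, i (if i ∈ T then A i else ∅) = if i ∈ T then i (A i) else 0 :=
      fun i hi => by split_ifs <;> simp [(hK i (Finset.mem_of_mem_erase hi)).empty]
    rw [Finset.sum_congr rfl hzero, Finset.sum_ite_mem, Finset.inter_eq_right.2 hT]
  rw [hunion, hsum]

lemma zero_mem_hatδSet (hK : ∀ f ∈ K, IsAdmissible D f) (hj : j ∈ K) : (0 : ℝ) ∈ hatδSet K := by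
  simpa [(hK j hj).empty] using
    mem_hatδSet_of_subset_erase hK hj (Finset.empty_subset _) (fun _ => ∅)

lemma bddAbove_hatδSet (hK : ∀ f ∈ K, IsAdmissible D f) : BddAbove (hatδSet K) := by
  rcases isEmpty_or_nonempty X with hX | ⟨⟨x⟩⟩
  · have hempty : ∀ B : Finset X, B = ∅ := Finset.eq_empty_of_isEmpty
    clear hX
    refine ⟨0, ?_⟩
    rintro r ⟨j, hj, A, rfl⟩
    rw [hempty ((K.erase j).biUnion A), (hK j hj).empty, zero_sub, neg_nonpos]
    exact Finset.sum_nonneg fun i hi => (hK i (Finset.mem_of_mem_erase hi)).nonneg (A i)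
  · refine ⟨∑ j ∈ K, ∑ i ∈ K, (j {x} + i {x}), ?_⟩
    rintro r ⟨j, hj, A, rfl⟩
    have hpos : ∀ f ∈ K, ∀ i ∈ K, 0 ≤ f {x} + i {x} := fun f hf i hi =>
      add_nonneg ((hK f hf).nonneg _) ((hK i hi).nonneg _)
    calc j ((K.erase j).biUnion A) - ∑ i ∈ K.erase j, i (A i)
        ≤ ∑ i ∈ K.erase j, (j (A i) - i (A i)) := by
          rw [Finset.sum_sub_distrib]
          linarith [(hK j hj).apply_biUnion_le (K.erase j) A]
      _ ≤ ∑ i ∈ K.erase j, (j {x} + i {x}) := Finset.sum_le_sum fun i hi => by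
          linarith [(hK j hj).le_add_singleton (hK i (Finset.mem_of_mem_erase hi)) (A i) x]
      _ ≤ ∑ i ∈ K, (j {x} + i {x}) :=
          Finset.sum_le_sum_of_subset_of_nonneg (Finset.erase_subset j K)
            fun i hi _ => hpos j hj i hi
      _ ≤ ∑ j ∈ K, ∑ i ∈ K, (j {x} + i {x}) :=
          Finset.single_le_sum (f := fun j => ∑ i ∈ K, (j {x} + i {x}))
            (fun f hf => Finset.sum_nonneg (hpos f hf)) hj

-- The `card ≤ 1` branch of `hatδ` is redundant: for `K = {j}` the only term is `j ∅ = 0`,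
-- and for `K = ∅` the set is empty, where `sSup ∅ = 0`.
lemma hatδ_eq_sSup (hK : ∀ f ∈ K, IsAdmissible D f) : hatδ K = sSup (hatδSet K) := by
  rw [hatδ_eq_ite]
  split_ifs with hcard
  · rcases Finset.card_le_one_iff_subset_singleton.1 hcard with ⟨j, hKj⟩
    rcases Finset.subset_singleton_iff.1 hKj with rfl | rfl
    · simp [hatδSet]
    · have hset : hatδSet {j} = {0} := by
        ext r
        simp [hatδSet, (hK j (Finset.mem_singleton_self j)).empty]
      rw [hset, csSup_singleton]
  · rfl

lemma hatδ_nonneg (hK : ∀ f ∈ K, IsAdmissible D f) : 0 ≤ hatδ K := by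
  rw [hatδ_eq_sSup hK]
  rcases K.eq_empty_or_nonempty with rfl | ⟨j, hj⟩
  · simp [hatδSet]
  · exact le_csSup (bddAbove_hatδSet hK) (zero_mem_hatδSet hK hj)

lemma sub_sum_le_hatδ (hK : ∀ f ∈ K, IsAdmissible D f) (hj : j ∈ K) (hT : T ⊆ K)
    (A : (Finset X → ℝ) → Finset X) :
    j (T.biUnion A) - ∑ i ∈ T, i (A i) ≤ hatδ K := by
  have hmem := mem_hatδSet_of_subset_erase hK hj (Finset.erase_subset_erase j hT) A
  have herase : j (T.biUnion A) - ∑ i ∈ T, i (A i)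
      ≤ j ((T.erase j).biUnion A) - ∑ i ∈ T.erase j, i (A i) := by
    by_cases hjT : j ∈ T
    · rw [Finset.biUnion_eq_union_biUnion_erase hjT, ← Finset.add_sum_erase T _ hjT]
      linarith [(hK j hj).subadd (A j) ((T.erase j).biUnion A)]
    · rw [Finset.erase_eq_of_notMem hjT]
  rw [hatδ_eq_sSup hK]
  exact herase.trans (le_csSup (bddAbove_hatδSet hK) hmem)

-- The extra set `C` is charged to `g`, merged with `A g` by subadditivity if `g ∈ T`.
lemma sub_sum_sub_le_hatδ (hK : ∀ f ∈ K, IsAdmissible D f) (hj : j ∈ K) (hg : g ∈ K)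
    (hT : T ⊆ K) (A : (Finset X → ℝ) → Finset X) (C : Finset X) :
    j (T.biUnion A ∪ C) - ∑ i ∈ T, i (A i) - g C ≤ hatδ K := by
  have hfold : ∀ C : Finset X,
      j ((T.erase g).biUnion A ∪ C) - ∑ i ∈ T.erase g, i (A i) - g C ≤ hatδ K := by
    intro C
    have h := sub_sum_le_hatδ hK hj (Finset.insert_subset hg ((T.erase_subset g).trans hT))
      (Function.update A g C)
    have hA : ∀ i ∈ T.erase g, Function.update A g C i = A i :=
      fun i hi => Function.update_of_ne (Finset.ne_of_mem_erase hi) _ _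
    rwa [Finset.biUnion_insert, Finset.sum_insert (T.notMem_erase g), Finset.biUnion_congr rfl hA,
      Finset.sum_congr rfl fun i hi => congrArg i (hA i hi), Function.update_self,
      Finset.union_comm, ← sub_sub, sub_right_comm] at h
  by_cases hgT : g ∈ T
  · have h := hfold (A g ∪ C)
    rw [Finset.biUnion_eq_union_biUnion_erase hgT, ← Finset.add_sum_erase T _ hgT]
    have hreassoc : A g ∪ (T.erase g).biUnion A ∪ C = (T.erase g).biUnion A ∪ (A g ∪ C) := by
      rw [Finset.union_comm (A g), Finset.union_assoc]
    rw [hreassoc]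
    linarith [(hK g hg).subadd (A g) C]
  · simpa [Finset.erase_eq_of_notMem hgT] using hfold C

lemma sub_sum_le_hatδ_add_hatδ (hF : ∀ f ∈ F, IsAdmissible D f)
    (hG : ∀ f ∈ G, IsAdmissible D f) (hH : ∀ f ∈ H, IsAdmissible D f) (hj : j ∈ F) (hg : g ∈ G)
    (hT : T ⊆ F ∪ H) (A : (Finset X → ℝ) → Finset X) :
    j (T.biUnion A) - ∑ i ∈ T, i (A i) ≤ hatδ (F ∪ G) + hatδ (G ∪ H) := by
  have hFG : ∀ f ∈ F ∪ G, IsAdmissible D f := Finset.forall_mem_union.2 ⟨hF, hG⟩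
  have hGH : ∀ f ∈ G ∪ H, IsAdmissible D f := Finset.forall_mem_union.2 ⟨hG, hH⟩
  set TF := T.filter (· ∈ F)
  set TH := T.filter (· ∉ F)
  have hTF : TF ⊆ F ∪ G := fun i hi => Finset.mem_union_left _ (Finset.mem_filter.1 hi).2
  have hTH : TH ⊆ G ∪ H := fun i hi => by
    obtain ⟨hiT, hiF⟩ := Finset.mem_filter.1 hi
    exact Finset.mem_union_right _ ((Finset.mem_union.1 (hT hiT)).resolve_left hiF)
  have hunion : T.biUnion A = TF.biUnion A ∪ TH.biUnion A := by
    rw [← Finset.union_biUnion, Finset.filter_union_filter_not_eq]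
  have hsum : ∑ i ∈ T, i (A i) = ∑ i ∈ TF, i (A i) + ∑ i ∈ TH, i (A i) :=
    (Finset.sum_filter_add_sum_filter_not T _ _).symm
  have h₁ := sub_sum_sub_le_hatδ hFG (Finset.mem_union_left _ hj) (Finset.mem_union_right _ hg)
    hTF A (TH.biUnion A)
  have h₂ := sub_sum_le_hatδ hGH (Finset.mem_union_left _ hg) hTH A
  rw [hunion, hsum]
  linarith

lemma hatδ_eq_zero_iff (hK : ∀ f ∈ K, IsAdmissible D f) : hatδ K = 0 ↔ K.card ≤ 1 := by
  refine ⟨fun h => ?_, fun h => by rw [hatδ_eq_ite, if_pos h]⟩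
  by_contra hcard
  obtain ⟨f, hf, g, hg, hfg⟩ := Finset.one_lt_card.1 (not_le.1 hcard)
  obtain ⟨A, hA⟩ := Function.ne_iff.1 hfg
  have hdiff : ∀ f ∈ K, ∀ g ∈ K, f A - g A ≤ hatδ K := fun f hf g hg => by
    simpa using sub_sum_le_hatδ hK hf (Finset.singleton_subset_iff.2 hg) (fun _ => A)
  exact hA (by linarith [hdiff f hf g hg, hdiff g hg f hf])

lemma hatδ_union_le_add (hF : ∀ f ∈ F, IsAdmissible D f) (hG : ∀ f ∈ G, IsAdmissible D f)
    (hH : ∀ f ∈ H, IsAdmissible D f) (hGne : G.Nonempty) :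
    hatδ (F ∪ H) ≤ hatδ (F ∪ G) + hatδ (G ∪ H) := by
  obtain ⟨g, hg⟩ := hGne
  have hFH : ∀ f ∈ F ∪ H, IsAdmissible D f := Finset.forall_mem_union.2 ⟨hF, hH⟩
  have hFG : ∀ f ∈ F ∪ G, IsAdmissible D f := Finset.forall_mem_union.2 ⟨hF, hG⟩
  have hGH : ∀ f ∈ G ∪ H, IsAdmissible D f := Finset.forall_mem_union.2 ⟨hG, hH⟩
  rw [hatδ_eq_sSup hFH]
  refine Real.sSup_le ?_ (add_nonneg (hatδ_nonneg hFG) (hatδ_nonneg hGH))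
  rintro r ⟨j, hj, A, rfl⟩
  rcases Finset.mem_union.1 hj with hjF | hjH
  · exact sub_sum_le_hatδ_add_hatδ hF hG hH hjF hg (Finset.erase_subset j _) A
  · have h := sub_sum_le_hatδ_add_hatδ hH hG hF hjH hg
      ((Finset.erase_subset j _).trans (Finset.union_comm F H).subset) A
    rwa [Finset.union_comm H G, Finset.union_comm G F, add_comm] at h

end HatDiversity

/-- `(E(X), δ̂)` is a diversity. -/
theorem stmt2 {X : Type*} (D : Diversity X) :
    ∃ E : Diversity {f : Finset X → ℝ // IsAdmissible D f},
      ∀ F : Finset {f : Finset X → ℝ // IsAdmissible D f},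
        E.δ F = hatδ (F.image Subtype.val) := by
  have hadm : ∀ F : Finset {f : Finset X → ℝ // IsAdmissible D f},
      ∀ f ∈ F.image Subtype.val, IsAdmissible D f := fun F f hf => by
    obtain ⟨a, -, rfl⟩ := Finset.mem_image.1 hf
    exact a.2
  refine ⟨{ δ := fun F => hatδ (F.image Subtype.val)
            nonneg := fun F => hatδ_nonneg (hadm F)
            eq_zero_iff := fun F => by
              rw [hatδ_eq_zero_iff (hadm F), Finset.card_image_of_injective _ Subtype.val_injective]
            triangle := fun A B C hB => by
              simpa only [Finset.image_union] using
                hatδ_union_le_add (hadm A) (hadm B) (hadm C) (hB.image _) }, fun F => rfl⟩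
end

section
/- Let (X, δ) be a diversity and let f₁, f₂ be two distinct admissible functions on X. Then δ̂({f₁, f₂}) = sup over finite B ⊆ X of |f₁(B) − f₂(B)|. -/
open scoped Classical

/-- For two distinct admissible functions, `δ̂({f₁, f₂}) = sup_B |f₁(B) − f₂(B)|`. -/
theorem stmt4 {X : Type*} (D : Diversity X) (f₁ f₂ : Finset X → ℝ)
    (h₁ : IsAdmissible D f₁) (h₂ : IsAdmissible D f₂) (hne : f₁ ≠ f₂) :
    hatδ ({f₁, f₂} : Finset (Finset X → ℝ)) =
      sSup { r : ℝ | ∃ B : Finset X, r = |f₁ B - f₂ B| } := by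
  have hc : ¬ ({f₁, f₂} : Finset (Finset X → ℝ)).card ≤ 1 := by
    rw [Finset.card_pair hne]; omega
  have he1 : ({f₁, f₂} : Finset (Finset X → ℝ)).erase f₁ = {f₂} :=
    Finset.erase_insert (by simpa using hne)
  have he2 : ({f₁, f₂} : Finset (Finset X → ℝ)).erase f₂ = {f₁} := by
    rw [Finset.pair_comm, Finset.erase_insert (by simpa using hne.symm)]
  rw [hatδ, if_neg hc]
  apply csSup_eq_csSup_of_forall_exists_le
  · rintro r ⟨j, hj, A, rfl⟩
    rcases Finset.mem_insert.mp hj with rfl | hj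
    · refine ⟨|j (A f₂) - f₂ (A f₂)|, ⟨A f₂, rfl⟩, ?_⟩
      rw [he1, Finset.singleton_biUnion, Finset.sum_singleton]
      exact le_abs_self _
    · rw [Finset.mem_singleton] at hj; subst hj
      refine ⟨|f₁ (A f₁) - j (A f₁)|, ⟨A f₁, rfl⟩, ?_⟩
      rw [he2, Finset.singleton_biUnion, Finset.sum_singleton, abs_sub_comm]
      exact le_abs_self _
  · rintro r ⟨B, rfl⟩
    rcases abs_cases (f₁ B - f₂ B) with ⟨h, _⟩ | ⟨h, _⟩
    · refine ⟨f₁ B - f₂ B, ⟨f₁, by simp, fun _ => B, ?_⟩, h.le⟩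
      rw [he1, Finset.singleton_biUnion, Finset.sum_singleton]
    · refine ⟨f₂ B - f₁ B, ⟨f₂, by simp, fun _ => B, ?_⟩, ?_⟩
      · rw [he2, Finset.singleton_biUnion, Finset.sum_singleton]
      · rw [h, neg_sub]
end

section
/- Let (X, δ) be a diversity, S ⊆ X, and f an admissible function on the restricted diversity (S, δ). Define f_S^X : P_fin(X) → ℝ by f_S^X(A) = inf over all finite B ⊆ S and all families (A_b)_{b∈B} of finite sets with ⋃_{b∈B} A_b = A of f(B) + Σ_{b∈B} δ(A_b ∪ {b}). Then f_S^X is an admissible function on (X, δ), and f_S^X(A) = f(A) for all finite A ⊆ S. -/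
open scoped Classical

attribute [-instance] Subtype.instDecidableEq

section Aux

variable {X : Type*} (D : Diversity X)

lemma Diversity.singleton_zero (x : X) : D.δ {x} = 0 :=
  (D.eq_zero_iff _).mpr (by simp)

lemma Diversity.empty_zero : D.δ ∅ = 0 :=
  (D.eq_zero_iff _).mpr (by simp)

lemma Diversity.mono {A B : Finset X} (h : A ⊆ B) : D.δ A ≤ D.δ B := by
  have key : ∀ C : Finset X, D.δ A ≤ D.δ (A ∪ C) := by
    intro C
    induction C using Finset.induction_on with
    | empty => simp
    | @insert x C hx ih =>
      have h1 := D.triangle (A ∪ C) {x} ∅ (by simp)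
      have e1 : (A ∪ C) ∪ {x} = A ∪ insert x C := by
        ext y
        simp only [Finset.mem_union, Finset.mem_insert, Finset.mem_singleton]; tauto
      simp only [Finset.union_empty, e1, Diversity.singleton_zero] at h1
      linarith
  have := key B
  rwa [Finset.union_eq_right.mpr h] at this

/-- Star inequality: covering a union by a star centered at `B.image g`. -/
lemma Diversity.star {ι : Type*} (g : ι → X) (As : ι → Finset X) (B : Finset ι) :
    ∀ E : Finset X, D.δ (E ∪ B.image g ∪ B.biUnion As) ≤
      D.δ (E ∪ B.image g) + ∑ b ∈ B, D.δ (insert (g b) (As b)) := by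
  induction B using Finset.induction_on with
  | empty => intro E; simp
  | @insert b B hb ih =>
    intro E
    have h1 := D.triangle (As b) {g b}
      (E ∪ insert (g b) (B.image g) ∪ B.biUnion As) (by simp)
    have e1 : E ∪ insert (g b) (B.image g) ∪ (As b ∪ B.biUnion As) =
        As b ∪ (E ∪ insert (g b) (B.image g) ∪ B.biUnion As) := by
      ext y
      simp only [Finset.mem_union, Finset.mem_insert, Finset.mem_singleton]; tauto
    have e2 : As b ∪ {g b} = insert (g b) (As b) := by
      ext y
      simp only [Finset.mem_union, Finset.mem_insert, Finset.mem_singleton]; tauto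
    have e3 : {g b} ∪ (E ∪ insert (g b) (B.image g) ∪ B.biUnion As) =
        E ∪ insert (g b) (B.image g) ∪ B.biUnion As := by
      ext y
      simp only [Finset.mem_union, Finset.mem_insert, Finset.mem_singleton]; tauto
    have e4 : insert (g b) E ∪ B.image g = E ∪ insert (g b) (B.image g) := by
      ext y
      simp only [Finset.mem_union, Finset.mem_insert, Finset.mem_singleton]; tauto
    have e5 : insert (g b) E ∪ B.image g ∪ B.biUnion As =
        E ∪ insert (g b) (B.image g) ∪ B.biUnion As := by
      ext y
      simp only [Finset.mem_union, Finset.mem_insert, Finset.mem_singleton]; tauto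
    rw [e2, e3] at h1
    have h2 := ih (insert (g b) E)
    rw [e5, e4] at h2
    rw [Finset.image_insert, Finset.biUnion_insert, e1, Finset.sum_insert hb]
    linarith

/-- Reverse star inequality for an admissible function. -/
lemma fstar {S : Set X} {f : Finset S → ℝ}
    (hf : IsAdmissible (D.restrict S) f) (Cs : S → Finset S) (B : Finset S) :
    ∀ E : Finset S, f (E ∪ B.biUnion Cs) ≤
      f (E ∪ B) + ∑ b ∈ B, (D.restrict S).δ (insert b (Cs b)) := by
  induction B using Finset.induction_on with
  | empty => intro E; simp
  | @insert b B hb ih =>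
    intro E
    have h1 := hf.tri (E ∪ B.biUnion Cs) (Cs b) {b} (by simp)
    have e1 : E ∪ (Cs b ∪ B.biUnion Cs) = (E ∪ B.biUnion Cs) ∪ Cs b := by
      ext y
      simp only [Finset.mem_union, Finset.mem_insert, Finset.mem_singleton]; tauto
    have e2 : (E ∪ B.biUnion Cs) ∪ {b} = insert b E ∪ B.biUnion Cs := by
      ext y
      simp only [Finset.mem_union, Finset.mem_insert, Finset.mem_singleton]; tauto
    have e3 : Cs b ∪ {b} = insert b (Cs b) := by
      ext y
      simp only [Finset.mem_union, Finset.mem_insert, Finset.mem_singleton]; tauto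
    rw [e2, e3] at h1
    have h2 := ih (insert b E)
    have e4 : insert b E ∪ B = E ∪ insert b B := by
      ext y
      simp only [Finset.mem_union, Finset.mem_insert, Finset.mem_singleton]; tauto
    rw [e4] at h2
    rw [Finset.biUnion_insert, e1, Finset.sum_insert hb]
    linarith

end Aux

/-- The extension `f_S^X` of an admissible function on `S ⊆ X` is admissible on `X`
and agrees with `f` on finite subsets of `S`. -/
theorem stmt5 {X : Type*} (D : Diversity X) (S : Set X) (hS : S.Nonempty)
    (f : Finset S → ℝ) (hf : IsAdmissible (D.restrict S) f) :
    IsAdmissible D (extFun D S f) ∧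
    ∀ A : Finset S, extFun D S f (A.image Subtype.val) = f A := by
  obtain ⟨s₀, hs₀⟩ := hS
  set T : Finset X → Set ℝ := fun A => { r : ℝ | ∃ (B : Finset S) (As : S → Finset X),
    B.biUnion As = A ∧ r = f B + ∑ b ∈ B, D.δ (insert (b : X) (As b)) } with hTdef
  have hext : ∀ A, extFun D S f A = sInf (T A) := fun A => rfl
  -- auxiliary triangle consequence
  have tri2 : ∀ (x : X) (P Q : Finset X),
      D.δ (insert x (P ∪ Q)) ≤ D.δ (insert x P) + D.δ (insert x Q) := by
    intro x P Q
    have h := D.triangle P {x} (insert x Q) (by simp)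
    have e1 : P ∪ insert x Q = insert x (P ∪ Q) := by
      ext y; simp only [Finset.mem_union, Finset.mem_insert]; tauto
    have e2 : P ∪ {x} = insert x P := by
      ext y; simp only [Finset.mem_union, Finset.mem_insert, Finset.mem_singleton]; tauto
    have e3 : {x} ∪ insert x Q = insert x Q := by
      ext y; simp only [Finset.mem_union, Finset.mem_insert, Finset.mem_singleton]; tauto
    rw [e1, e2, e3] at h
    exact h
  -- every element of T A is at least δ A
  have hlb : ∀ A : Finset X, ∀ r ∈ T A, D.δ A ≤ r := by
    rintro A r ⟨B, As, hBA, rfl⟩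
    have h1 : D.δ A ≤ D.δ (∅ ∪ B.image Subtype.val ∪ B.biUnion As) := by
      apply D.mono
      intro x hx
      rw [hBA]
      simp only [Finset.mem_union]
      tauto
    have h2 := D.star Subtype.val As B ∅
    have h3 : D.δ (∅ ∪ B.image Subtype.val) ≤ f B := by
      rw [Finset.empty_union]
      exact hf.le B
    linarith
  have hne : ∀ A : Finset X, (T A).Nonempty := by
    intro A
    exact ⟨_, ⟨{⟨s₀, hs₀⟩}, fun _ => A, by simp, rfl⟩⟩
  have hbdd : ∀ A : Finset X, BddBelow (T A) := fun A => ⟨D.δ A, fun r hr => hlb A r hr⟩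
  have hle : ∀ A : Finset X, D.δ A ≤ extFun D S f A := by
    intro A
    rw [hext A]
    exact le_csInf (hne A) (hlb A)
  have hub : ∀ (A : Finset X) (r : ℝ), r ∈ T A → extFun D S f A ≤ r := by
    intro A r hr
    rw [hext A]
    exact csInf_le (hbdd A) hr
  -- empty
  have hempty : extFun D S f ∅ = 0 := by
    have h0 : (0 : ℝ) ∈ T ∅ := ⟨∅, fun _ => ∅, by simp, by simp [hf.empty]⟩
    have h1 := hub ∅ 0 h0
    have h2 := hle ∅
    rw [D.empty_zero] at h2
    linarith
  -- subadditivity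
  have hsub : ∀ A A' : Finset X, extFun D S f (A ∪ A') ≤ extFun D S f A + extFun D S f A' := by
    intro A A'
    have key : ∀ r ∈ T A, ∀ r' ∈ T A', extFun D S f (A ∪ A') ≤ r + r' := by
      rintro r ⟨B, As, hB, rfl⟩ r' ⟨B', As', hB', rfl⟩
      set Js : S → Finset X :=
        fun b => (if b ∈ B then As b else ∅) ∪ (if b ∈ B' then As' b else ∅) with hJs
      have hJ : (B ∪ B').biUnion Js = A ∪ A' := by
        apply Finset.Subset.antisymm
        · apply Finset.biUnion_subset.mpr
          intro b _
          apply Finset.union_subset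
          · split_ifs with h
            · rw [← hB]
              exact (Finset.subset_biUnion_of_mem As h).trans Finset.subset_union_left
            · exact Finset.empty_subset _
          · split_ifs with h
            · rw [← hB']
              exact (Finset.subset_biUnion_of_mem As' h).trans Finset.subset_union_right
            · exact Finset.empty_subset _
        · intro x hx
          rcases Finset.mem_union.mp hx with hx | hx
          · rw [← hB] at hx
            obtain ⟨b, hb, hxb⟩ := Finset.mem_biUnion.mp hx
            refine Finset.mem_biUnion.mpr ⟨b, Finset.mem_union_left _ hb, ?_⟩
            apply Finset.mem_union_left
            rw [if_pos hb]
            exact hxb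
          · rw [← hB'] at hx
            obtain ⟨b, hb, hxb⟩ := Finset.mem_biUnion.mp hx
            refine Finset.mem_biUnion.mpr ⟨b, Finset.mem_union_right _ hb, ?_⟩
            apply Finset.mem_union_right
            rw [if_pos hb]
            exact hxb
      have mem : f (B ∪ B') + ∑ b ∈ B ∪ B', D.δ (insert (b : X) (Js b)) ∈ T (A ∪ A') :=
        ⟨B ∪ B', Js, hJ, rfl⟩
      have hpt : ∀ b ∈ B ∪ B', D.δ (insert (b : X) (Js b)) ≤
          (if b ∈ B then D.δ (insert (b : X) (As b)) else 0) +
          (if b ∈ B' then D.δ (insert (b : X) (As' b)) else 0) := by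
        intro b hb
        by_cases hb1 : b ∈ B <;> by_cases hb2 : b ∈ B'
        · simp only [hJs, if_pos hb1, if_pos hb2]
          exact tri2 _ _ _
        · simp only [hJs, if_pos hb1, if_neg hb2, Finset.union_empty, add_zero, le_refl]
        · simp only [hJs, if_neg hb1, if_pos hb2, Finset.empty_union, zero_add, le_refl]
        · exact absurd (Finset.mem_union.mp hb) (by tauto)
      have hsum : ∑ b ∈ B ∪ B', D.δ (insert (b : X) (Js b)) ≤
          (∑ b ∈ B, D.δ (insert (b : X) (As b))) +
          (∑ b ∈ B', D.δ (insert (b : X) (As' b))) := by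
        calc ∑ b ∈ B ∪ B', D.δ (insert (b : X) (Js b))
            ≤ ∑ b ∈ B ∪ B', ((if b ∈ B then D.δ (insert (b : X) (As b)) else 0) +
              (if b ∈ B' then D.δ (insert (b : X) (As' b)) else 0)) :=
              Finset.sum_le_sum hpt
          _ = (∑ b ∈ B ∪ B', if b ∈ B then D.δ (insert (b : X) (As b)) else 0) +
              (∑ b ∈ B ∪ B', if b ∈ B' then D.δ (insert (b : X) (As' b)) else 0) :=
              Finset.sum_add_distrib
          _ = (∑ b ∈ B, D.δ (insert (b : X) (As b))) +
              (∑ b ∈ B', D.δ (insert (b : X) (As' b))) := by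
              rw [Finset.sum_ite_mem, Finset.sum_ite_mem, Finset.union_inter_cancel_left,
                Finset.union_inter_cancel_right]
      have hfB := hf.subadd B B'
      have := hub (A ∪ A') _ mem
      linarith
    have step1 : ∀ r ∈ T A, extFun D S f (A ∪ A') - r ≤ sInf (T A') := by
      intro r hr
      exact le_csInf (hne A') (fun r' hr' => by linarith [key r hr r' hr'])
    have step2 : extFun D S f (A ∪ A') - sInf (T A') ≤ sInf (T A) :=
      le_csInf (hne A) (fun r hr => by linarith [step1 r hr])
    rw [hext A, hext A']
    linarith
  -- triangle
  have htri : ∀ (A Bf Cf : Finset X), Cf.Nonempty →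
      extFun D S f (A ∪ Bf) ≤ extFun D S f (A ∪ Cf) + D.δ (Bf ∪ Cf) := by
    intro A Bf Cf hCf
    obtain ⟨c, hc⟩ := hCf
    have key : ∀ r ∈ T (A ∪ Cf), extFun D S f (A ∪ Bf) ≤ r + D.δ (Bf ∪ Cf) := by
      rintro r ⟨B₀, As, hB, rfl⟩
      have hcA : c ∈ B₀.biUnion As := by
        rw [hB]; exact Finset.mem_union_right _ hc
      obtain ⟨b₀, hb₀, hcb₀⟩ := Finset.mem_biUnion.mp hcA
      set Js : S → Finset X :=
        fun b => (As b ∩ (A ∪ Bf)) ∪ (if b = b₀ then Bf else ∅) with hJs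
      have hJ : B₀.biUnion Js = A ∪ Bf := by
        apply Finset.Subset.antisymm
        · apply Finset.biUnion_subset.mpr
          intro b _
          apply Finset.union_subset Finset.inter_subset_right
          split_ifs
          · exact Finset.subset_union_right
          · exact Finset.empty_subset _
        · intro x hx
          rcases Finset.mem_union.mp hx with hx' | hx'
          · have : x ∈ B₀.biUnion As := by
              rw [hB]; exact Finset.mem_union_left _ hx'
            obtain ⟨b, hb, hxb⟩ := Finset.mem_biUnion.mp this
            refine Finset.mem_biUnion.mpr ⟨b, hb, Finset.mem_union_left _ ?_⟩
            exact Finset.mem_inter.mpr ⟨hxb, hx⟩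
          · refine Finset.mem_biUnion.mpr ⟨b₀, hb₀, Finset.mem_union_right _ ?_⟩
            rw [if_pos rfl]
            exact hx'
      have mem : f B₀ + ∑ b ∈ B₀, D.δ (insert (b : X) (Js b)) ∈ T (A ∪ Bf) :=
        ⟨B₀, Js, hJ, rfl⟩
      have hb₀term : D.δ (insert (b₀ : X) (Js b₀)) ≤
          D.δ (insert (b₀ : X) (As b₀)) + D.δ (Bf ∪ Cf) := by
        have h := D.triangle (insert (b₀ : X) (As b₀ ∩ (A ∪ Bf))) {c} Bf (by simp)
        have e1 : insert (b₀ : X) (Js b₀) =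
            insert (b₀ : X) (As b₀ ∩ (A ∪ Bf)) ∪ Bf := by
          simp only [hJs, if_pos rfl]
          ext y; simp only [Finset.mem_union, Finset.mem_insert]; tauto
        have m1 : D.δ (insert (b₀ : X) (As b₀ ∩ (A ∪ Bf)) ∪ {c}) ≤
            D.δ (insert (b₀ : X) (As b₀)) := by
          apply D.mono
          intro y hy
          simp only [Finset.mem_union, Finset.mem_insert, Finset.mem_singleton,
            Finset.mem_inter] at hy ⊢
          rcases hy with (h' | ⟨h', _⟩) | h'
          · exact Or.inl h'
          · exact Or.inr h'
          · subst h'; exact Or.inr hcb₀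
        have m2 : D.δ ({c} ∪ Bf) ≤ D.δ (Bf ∪ Cf) := by
          apply D.mono
          intro y hy
          simp only [Finset.mem_union, Finset.mem_singleton] at hy ⊢
          rcases hy with h' | h'
          · subst h'; exact Or.inr hc
          · exact Or.inl h'
        rw [e1]
        linarith
      have herase : ∀ b ∈ B₀.erase b₀,
          D.δ (insert (b : X) (Js b)) ≤ D.δ (insert (b : X) (As b)) := by
        intro b hb
        have hb' : b ≠ b₀ := Finset.ne_of_mem_erase hb
        apply D.mono
        intro y hy
        simp only [hJs, if_neg hb', Finset.union_empty, Finset.mem_insert,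
          Finset.mem_inter] at hy ⊢
        tauto
      have hsum : ∑ b ∈ B₀, D.δ (insert (b : X) (Js b)) ≤
          (∑ b ∈ B₀, D.δ (insert (b : X) (As b))) + D.δ (Bf ∪ Cf) := by
        rw [← Finset.add_sum_erase _ _ hb₀, ← Finset.add_sum_erase _
          (fun b : S => D.δ (insert (b : X) (As b))) hb₀]
        have := Finset.sum_le_sum herase
        linarith
      have := hub (A ∪ Bf) _ mem
      linarith
    have step : extFun D S f (A ∪ Bf) - D.δ (Bf ∪ Cf) ≤ sInf (T (A ∪ Cf)) :=
      le_csInf (hne _) (fun r hr => by linarith [key r hr])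
    rw [hext (A ∪ Cf)]
    linarith
  refine ⟨⟨hempty, hle, htri, hsub⟩, ?_⟩
  -- agreement on S
  intro A
  have mem : f A ∈ T (A.image Subtype.val) := by
    refine ⟨A, fun b => {(b : X)}, ?_, ?_⟩
    · ext x
      simp
    · have : ∀ b ∈ A, D.δ (insert (b : X) {(b : X)}) = 0 := by
        intro b _
        rw [Finset.insert_eq_self.mpr (Finset.mem_singleton_self _)]
        exact D.singleton_zero _
      rw [Finset.sum_congr rfl this]
      simp
  have h1 : extFun D S f (A.image Subtype.val) ≤ f A := hub _ _ mem
  have h2 : f A ≤ extFun D S f (A.image Subtype.val) := by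
    rw [hext]
    apply le_csInf (hne _)
    rintro r ⟨B, As, hBA, rfl⟩
    set Cs : S → Finset S := fun b => A.filter (fun a => (a : X) ∈ As b) with hCs
    have hCsA : B.biUnion Cs = A := by
      ext a
      simp only [Finset.mem_biUnion, hCs, Finset.mem_filter]
      constructor
      · rintro ⟨b, _, ha, _⟩
        exact ha
      · intro ha
        have : (a : X) ∈ B.biUnion As := by
          rw [hBA]
          exact Finset.mem_image_of_mem _ ha
        obtain ⟨b, hb, hab⟩ := Finset.mem_biUnion.mp this
        exact ⟨b, hb, ha, hab⟩
    have hcost : ∀ b ∈ B,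
        (D.restrict S).δ (insert b (Cs b)) ≤ D.δ (insert (b : X) (As b)) := by
      intro b _
      have hre : (D.restrict S).δ (insert b (Cs b)) =
          D.δ ((insert b (Cs b)).image Subtype.val) := rfl
      rw [hre]
      apply D.mono
      intro y hy
      rw [Finset.image_insert] at hy
      simp only [Finset.mem_insert, Finset.mem_image, hCs, Finset.mem_filter] at hy ⊢
      rcases hy with h' | ⟨a, ⟨_, ha2⟩, rfl⟩
      · exact Or.inl h'
      · exact Or.inr ha2
    have hf1 := fstar D hf Cs B ∅
    rw [Finset.empty_union, Finset.empty_union, hCsA] at hf1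
    have hf2 := Finset.sum_le_sum hcost
    linarith
  linarith
end

section
/- Let (X, δ) be a diversity, S ⊆ X, and f an admissible function on the restricted diversity (S, δ). Then f_S^X is the unique maximal admissible extension of f: for every admissible function g on (X, δ) whose restriction to finite subsets of S equals f, one has g(A) ≤ f_S^X(A) for all finite A ⊆ X. -/
open scoped Classical

/-- `f_S^X` is the unique maximal admissible extension of `f`: any admissible `g`
on `X` restricting to `f` on `S` satisfies `g ≤ f_S^X` pointwise. -/
theorem stmt6 {X : Type*} (D : Diversity X) (S : Set X) (hS : S.Nonempty)
    (f : Finset S → ℝ) (hf : IsAdmissible (D.restrict S) f)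
    (g : Finset X → ℝ) (hg : IsAdmissible D g)
    (hres : ∀ A : Finset S, g (A.image Subtype.val) = f A) :
    ∀ A : Finset X, g A ≤ extFun D S f A :=  by
  intro A
  have hsing : ∀ b : X, D.δ {b} = 0 := fun b => (D.eq_zero_iff {b}).2 (by simp)
  have key : ∀ (B : Finset S) (As : S → Finset X) (P : Finset X),
      g (P ∪ B.biUnion As) ≤ g (P ∪ B.image Subtype.val)
        + ∑ b ∈ B, D.δ (insert (b : X) (As b)) := by
    intro B As
    induction B using Finset.induction_on with
    | empty => intro P; simp
    | @insert b B' hb ih =>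
      intro P
      have h1 : g (P ∪ (insert b B').biUnion As)
          ≤ g ((P ∪ {(b : X)}) ∪ B'.biUnion As) + D.δ (insert (b : X) (As b)) := by
        have htri := hg.tri (P ∪ B'.biUnion As) (As b) {(b : X)}
          (Finset.singleton_nonempty _)
        have e1 : P ∪ (insert b B').biUnion As = (P ∪ B'.biUnion As) ∪ As b := by
          rw [Finset.biUnion_insert]; ac_rfl
        have e2 : (P ∪ B'.biUnion As) ∪ {(b : X)} = (P ∪ {(b : X)}) ∪ B'.biUnion As := by
          ac_rfl
        have e3 : As b ∪ {(b : X)} = insert (b : X) (As b) := by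
          rw [Finset.insert_eq]; exact Finset.union_comm _ _
        rw [e1, ← e2, ← e3]
        exact htri
      have h2 := ih (P ∪ {(b : X)})
      have e4 : (P ∪ {(b : X)}) ∪ B'.image Subtype.val
          = P ∪ (insert b B').image Subtype.val := by
        rw [Finset.image_insert, Finset.insert_eq]; ac_rfl
      rw [e4] at h2
      rw [Finset.sum_insert hb]
      linarith
  refine le_csInf ?_ ?_
  · obtain ⟨s, hs⟩ := hS
    exact ⟨f {⟨s, hs⟩} + ∑ b ∈ ({⟨s, hs⟩} : Finset S), D.δ (insert (b : X) A),
      {⟨s, hs⟩}, fun _ => A, by simp, rfl⟩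
  · rintro r ⟨B, As, hBA, rfl⟩
    have h := key B As ∅
    rw [hBA] at h
    simpa [hres B] using h
end

section
/- Let f be an admissible function on a diversity (X, δ). Let A = {a₁, …, a_n} and B = {b₁, …, b_n} be subsets of X such that δ({a_i, b_i}) ≤ ε for i = 1, …, n. Then |f(A) − f(B)| ≤ n·ε. -/
open scoped Classical

lemma stmt7_aux {X : Type*} (D : Diversity X) (f : Finset X → ℝ)
    (hf : IsAdmissible D f) (n : ℕ) (a b : Fin n → X) (ε : ℝ)
    (h : ∀ i : Fin n, D.δ {a i, b i} ≤ ε) :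
    f (Finset.image b Finset.univ) ≤ f (Finset.image a Finset.univ) + n * ε := by
  set S : ℕ → Finset X := fun k =>
    (Finset.univ.filter (fun i : Fin n => i.val < k)).image b ∪
    (Finset.univ.filter (fun i : Fin n => ¬ i.val < k)).image a with hS
  have hS0 : S 0 = Finset.image a Finset.univ := by
    simp [hS]
  have hSn : S n = Finset.image b Finset.univ := by
    have h1 : (Finset.univ.filter (fun i : Fin n => i.val < n)) = Finset.univ := by
      ext i; simp [i.isLt]
    have h2 : (Finset.univ.filter (fun i : Fin n => ¬ i.val < n)) = ∅ := by
      ext i; simp [i.isLt]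
    simp only [hS, h1, h2, Finset.union_empty, Finset.image_empty, Finset.empty_union]
  have step : ∀ k, k < n → f (S (k + 1)) ≤ f (S k) + ε := by
    intro k hk
    set T : Finset X :=
      (Finset.univ.filter (fun i : Fin n => i.val < k)).image b ∪
      (Finset.univ.filter (fun i : Fin n => k < i.val)).image a with hT
    have h1 : S k = T ∪ {a ⟨k, hk⟩} := by
      ext x
      simp only [hS, hT, Finset.mem_union, Finset.mem_image, Finset.mem_filter,
        Finset.mem_univ, true_and, Finset.mem_singleton]
      constructor
      · rintro (⟨i, hi, rfl⟩ | ⟨i, hi, rfl⟩)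
        · exact Or.inl (Or.inl ⟨i, hi, rfl⟩)
        · rcases Nat.lt_or_ge k i.val with hlt | hge
          · exact Or.inl (Or.inr ⟨i, hlt, rfl⟩)
          · have : i = ⟨k, hk⟩ := Fin.ext (le_antisymm hge (Nat.le_of_not_lt hi))
            exact Or.inr (by rw [this])
      · rintro ((⟨i, hi, rfl⟩ | ⟨i, hi, rfl⟩) | rfl)
        · exact Or.inl ⟨i, hi, rfl⟩
        · exact Or.inr ⟨i, Nat.not_lt_of_lt hi, rfl⟩
        · exact Or.inr ⟨⟨k, hk⟩, Nat.lt_irrefl k, rfl⟩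
    have h2 : S (k + 1) = T ∪ {b ⟨k, hk⟩} := by
      ext x
      simp only [hS, hT, Finset.mem_union, Finset.mem_image, Finset.mem_filter,
        Finset.mem_univ, true_and, Finset.mem_singleton]
      constructor
      · rintro (⟨i, hi, rfl⟩ | ⟨i, hi, rfl⟩)
        · rcases Nat.lt_or_ge i.val k with hlt | hge
          · exact Or.inl (Or.inl ⟨i, hlt, rfl⟩)
          · have : i = ⟨k, hk⟩ := Fin.ext (le_antisymm (Nat.lt_succ_iff.mp hi) hge)
            exact Or.inr (by rw [this])
        · exact Or.inl (Or.inr ⟨i, Nat.lt_of_succ_le (Nat.le_of_not_lt hi), rfl⟩)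
      · rintro ((⟨i, hi, rfl⟩ | ⟨i, hi, rfl⟩) | rfl)
        · exact Or.inl ⟨i, Nat.lt_succ_of_lt hi, rfl⟩
        · exact Or.inr ⟨i, by omega, rfl⟩
        · exact Or.inl ⟨⟨k, hk⟩, Nat.lt_succ_self k, rfl⟩
    have htri := hf.tri T {b ⟨k, hk⟩} {a ⟨k, hk⟩} (Finset.singleton_nonempty _)
    have hδ : D.δ ({b ⟨k, hk⟩} ∪ {a ⟨k, hk⟩}) ≤ ε := by
      have : ({b ⟨k, hk⟩} ∪ {a ⟨k, hk⟩} : Finset X) = {a ⟨k, hk⟩, b ⟨k, hk⟩} := by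
        ext x; simp [Finset.mem_union]; tauto
      rw [this]; exact h ⟨k, hk⟩
    calc f (S (k + 1)) = f (T ∪ {b ⟨k, hk⟩}) := by rw [h2]
      _ ≤ f (T ∪ {a ⟨k, hk⟩}) + D.δ ({b ⟨k, hk⟩} ∪ {a ⟨k, hk⟩}) := htri
      _ ≤ f (S k) + ε := by rw [← h1]; linarith
  have main : ∀ k, k ≤ n → f (S k) ≤ f (S 0) + k * ε := by
    intro k
    induction k with
    | zero => intro _; simp
    | succ m ih =>
      intro hm
      have h1 := ih (Nat.le_of_succ_le hm)
      have h2 := step m (Nat.lt_of_succ_le hm)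
      push_cast
      linarith
  have := main n le_rfl
  rw [hS0, hSn] at this
  exact this

/-- Continuity of admissible functions: if `δ({aᵢ, bᵢ}) ≤ ε` for `i = 1, …, n` then
`|f({a₁,…,aₙ}) − f({b₁,…,bₙ})| ≤ n ε`. -/
theorem stmt7 {X : Type*} (D : Diversity X) (f : Finset X → ℝ)
    (hf : IsAdmissible D f) (n : ℕ) (a b : Fin n → X) (ε : ℝ)
    (h : ∀ i : Fin n, D.δ {a i, b i} ≤ ε) :
    |f (Finset.image a Finset.univ) - f (Finset.image b Finset.univ)| ≤ n * ε := by
  have h' : ∀ i : Fin n, D.δ {b i, a i} ≤ ε := fun i => by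
    rw [Finset.pair_comm]; exact h i
  have h1 := stmt7_aux D f hf n a b ε h
  have h2 := stmt7_aux D f hf n b a ε h'
  rw [abs_sub_le_iff]
  constructor <;> linarith
end
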